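/- arXiv:2004.11057 — 7 statements merged into one kernel-verified Lean document; each statement's English description precedes it below -/
import Mathlib

section
/- If X is a compact metric space and f : X → X, then f is an Edelstein contraction (i.e., d(f(x),f(y)) < d(x,y) for all x ≠ y) if and only if f is a Rakotch contraction (i.e., there is a nonincreasing λ : ℝ≥0 → [0,1] with λ(t) < 1 for t > 0 such that d(f(x),f(y)) ≤ λ(d(x,y))·d(x,y) for all x, y). -/
/-- On a compact metric space, a map is an Edelstein contraction iff it is a
Rakotch contraction. -/
theorem edelstein_iff_rakotch {X : Type*} [MetricSpace X] [CompactSpace X] (f : X → X) :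
    (∀ x y : X, x ≠ y → dist (f x) (f y) < dist x y) ↔
    (∃ lam : ℝ → ℝ,
      (∀ s t : ℝ, 0 ≤ s → s ≤ t → lam t ≤ lam s) ∧
      (∀ t : ℝ, 0 ≤ t → 0 ≤ lam t ∧ lam t ≤ 1) ∧
      (∀ t : ℝ, 0 < t → lam t < 1) ∧
      (∀ x y : X, dist (f x) (f y) ≤ lam (dist x y) * dist x y)) := by
  constructor
  · intro h
    -- f is nonexpansive
    have hne : ∀ x y : X, dist (f x) (f y) ≤ dist x y := by
      intro x y
      by_cases hxy : x = y
      · simp [hxy]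
      · exact (h x y hxy).le
    have hf : Continuous f := LipschitzWith.continuous (f := f) (K := 1) (by
      intro x y
      rw [edist_dist, edist_dist, ENNReal.coe_one, one_mul]
      exact ENNReal.ofReal_le_ofReal (hne x y))
    set S : ℝ → Set ℝ :=
      fun t => insert 0 {r | ∃ x y : X, t ≤ dist x y ∧ r = dist (f x) (f y) / dist x y} with hS
    have hSne : ∀ t, (S t).Nonempty := fun t => ⟨0, Set.mem_insert _ _⟩
    have hratio_le_one : ∀ x y : X, dist (f x) (f y) / dist x y ≤ 1 := by
      intro x y
      rcases eq_or_ne x y with rfl | hxy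
      · simp
      · have hd : 0 < dist x y := dist_pos.2 hxy
        exact (div_le_one hd).2 (hne x y)
    have hratio_nonneg : ∀ x y : X, 0 ≤ dist (f x) (f y) / dist x y :=
      fun x y => div_nonneg dist_nonneg dist_nonneg
    have hbdd : ∀ t, BddAbove (S t) := by
      intro t
      refine ⟨1, ?_⟩
      rintro r (rfl | ⟨x, y, _, rfl⟩)
      · exact zero_le_one
      · exact hratio_le_one x y
    set lam : ℝ → ℝ := fun t => sSup (S t) with hlam
    refine ⟨lam, ?_, ?_, ?_, ?_⟩
    · intro s t _ hst
      apply csSup_le_csSup (hbdd s) (hSne t)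
      rintro r (rfl | ⟨x, y, hxy, rfl⟩)
      · exact Set.mem_insert _ _
      · exact Set.mem_insert_of_mem _ ⟨x, y, le_trans hst hxy, rfl⟩
    · intro t _
      constructor
      · exact le_csSup (hbdd t) (Set.mem_insert _ _)
      · apply csSup_le (hSne t)
        rintro r (rfl | ⟨x, y, _, rfl⟩)
        · exact zero_le_one
        · exact hratio_le_one x y
    · intro t ht
      set K : Set (X × X) := {p | t ≤ dist p.1 p.2} with hK
      have hKclosed : IsClosed K :=
        isClosed_le continuous_const continuous_dist
      have hKcompact : IsCompact K := hKclosed.isCompact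
      rcases K.eq_empty_or_nonempty with hKe | hKne
      · have : S t = {0} := by
          apply Set.eq_singleton_iff_unique_mem.2
          refine ⟨Set.mem_insert _ _, ?_⟩
          rintro r (rfl | ⟨x, y, hxy, rfl⟩)
          · rfl
          · exact absurd (Set.eq_empty_iff_forall_notMem.1 hKe (x, y) hxy) (by simp [hK, hxy])
        simp only [hlam, this, csSup_singleton]
        exact zero_lt_one
      · have hgcont : ContinuousOn
            (fun p : X × X => dist (f p.1) (f p.2) / dist p.1 p.2) K := by
          apply ContinuousOn.div
          · exact ((hf.comp continuous_fst).dist (hf.comp continuous_snd)).continuousOn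
          · exact continuous_dist.continuousOn
          · intro p hp
            have : (0:ℝ) < dist p.1 p.2 := lt_of_lt_of_le ht hp
            exact ne_of_gt this
        obtain ⟨p, hpK, hpmax⟩ := hKcompact.exists_isMaxOn hKne hgcont
        have hdp : 0 < dist p.1 p.2 := lt_of_lt_of_le ht hpK
        have hpne : p.1 ≠ p.2 := dist_pos.1 hdp
        have hglt : dist (f p.1) (f p.2) / dist p.1 p.2 < 1 :=
          (div_lt_one hdp).2 (h p.1 p.2 hpne)
        have : lam t ≤ dist (f p.1) (f p.2) / dist p.1 p.2 := by
          apply csSup_le (hSne t)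
          rintro r (rfl | ⟨x, y, hxy, rfl⟩)
          · exact hratio_nonneg p.1 p.2
          · exact hpmax (show (x, y) ∈ K from hxy)
        exact lt_of_le_of_lt this hglt
    · intro x y
      rcases eq_or_ne x y with rfl | hxy
      · simp
      · have hd : 0 < dist x y := dist_pos.2 hxy
        have hmem : dist (f x) (f y) / dist x y ∈ S (dist x y) :=
          Set.mem_insert_of_mem _ ⟨x, y, le_refl _, rfl⟩
        have := le_csSup (hbdd (dist x y)) hmem
        calc dist (f x) (f y) = (dist (f x) (f y) / dist x y) * dist x y := by
              field_simp
          _ ≤ lam (dist x y) * dist x y := by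
              exact mul_le_mul_of_nonneg_right this dist_nonneg
  · rintro ⟨lam, _, _, hlt, hle⟩ x y hxy
    have hd : 0 < dist x y := dist_pos.2 hxy
    calc dist (f x) (f y) ≤ lam (dist x y) * dist x y := hle x y
      _ < 1 * dist x y := by
          exact mul_lt_mul_of_pos_right (hlt _ hd) hd
      _ = dist x y := one_mul _
end

section
/- Let X be a complete metric space and f : X → X. The following are equivalent: (i) f is a Rakotch contraction; (ii) f is a φ-contraction for some concave strictly increasing φ : [0,∞) → [0,∞) with φ(t) < t for t > 0; (iii) for every δ > 0 there exists λ < 1 such that d(x,y) ≥ δ implies d(f(x),f(y)) ≤ λ·d(x,y). -/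
open intervalIntegral in
lemma concaveOn_integral_antitone {m : ℝ → ℝ} (hm : Antitone m) :
    ConcaveOn ℝ (Set.Ici 0) (fun t => ∫ s in (0:ℝ)..t, m s) := by
  have hInt : ∀ a b : ℝ, IntervalIntegrable m MeasureTheory.volume a b :=
    fun a b => hm.intervalIntegrable
  have key : ∀ x y : ℝ, x ≤ y → ∀ a b : ℝ, 0 ≤ a → 0 ≤ b → a + b = 1 →
      a * (∫ s in (0:ℝ)..x, m s) + b * (∫ s in (0:ℝ)..y, m s) ≤
        ∫ s in (0:ℝ)..(a * x + b * y), m s := by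
    intro x y hxy a b ha hb hab
    obtain ⟨p, hp⟩ : ∃ p : ℝ, p = a * x + b * y := ⟨_, rfl⟩
    rw [← hp]
    have hx1 : a * x + b * x = x := by linear_combination x * hab
    have hy1 : a * y + b * y = y := by linear_combination y * hab
    have hxp : x ≤ p := by
      rw [hp]; linarith [mul_le_mul_of_nonneg_left hxy hb, hx1]
    have hpy : p ≤ y := by
      rw [hp]; linarith [mul_le_mul_of_nonneg_left hxy ha, hy1]
    have h1 : (∫ s in (0:ℝ)..p, m s) = (∫ s in (0:ℝ)..x, m s) + ∫ s in x..p, m s :=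
      (integral_add_adjacent_intervals (hInt 0 x) (hInt x p)).symm
    have h2 : (∫ s in (0:ℝ)..y, m s) = (∫ s in (0:ℝ)..p, m s) + ∫ s in p..y, m s :=
      (integral_add_adjacent_intervals (hInt 0 p) (hInt p y)).symm
    have hlow : m p * (p - x) ≤ ∫ s in x..p, m s := by
      have := integral_mono_on hxp (_root_.intervalIntegrable_const (c := m p)) (hInt x p)
        (fun s hs => hm hs.2)
      simpa [mul_comm] using this
    have hhigh : (∫ s in p..y, m s) ≤ m p * (y - p) := by
      have := integral_mono_on hpy (hInt p y) (_root_.intervalIntegrable_const (c := m p))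
        (fun s hs => hm hs.1)
      simpa [mul_comm] using this
    have hpe : b * (y - p) = a * (p - x) := by
      rw [hp]; linear_combination (-(a * x + b * y)) * hab
    have h3 : b * (∫ s in p..y, m s) ≤ b * (m p * (y - p)) :=
      mul_le_mul_of_nonneg_left hhigh hb
    have h4 : a * (m p * (p - x)) ≤ a * (∫ s in x..p, m s) :=
      mul_le_mul_of_nonneg_left hlow ha
    have hpe2 : m p * (b * (y - p)) = m p * (a * (p - x)) := by rw [hpe]
    have h2b : b * (∫ s in (0:ℝ)..y, m s)
        = b * ((∫ s in (0:ℝ)..p, m s) + ∫ s in p..y, m s) := by rw [h2]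
    have h1a : a * (∫ s in (0:ℝ)..p, m s)
        = a * ((∫ s in (0:ℝ)..x, m s) + ∫ s in x..p, m s) := by rw [h1]
    have hI : a * (∫ s in (0:ℝ)..p, m s) + b * (∫ s in (0:ℝ)..p, m s)
        = ∫ s in (0:ℝ)..p, m s := by linear_combination (∫ s in (0:ℝ)..p, m s) * hab
    nlinarith [h3, h4, hpe2, h2b, h1a, hI]
  refine ⟨convex_Ici 0, fun x _ y _ a b ha hb hab => ?_⟩
  simp only [smul_eq_mul]
  rcases le_total x y with h | h
  · exact key x y h a b ha hb hab
  · have := key y x h b a hb ha (by linarith)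
    rw [add_comm (a * x) (b * y)]
    linarith [this]

/-- Characterization of Rakotch contractions on a complete metric space. -/
theorem rakotch_characterization {X : Type*} [MetricSpace X] [CompleteSpace X] (f : X → X) :
    List.TFAE [
      -- (i) f is a Rakotch contraction
      (∃ lam : ℝ → ℝ,
        (∀ s t : ℝ, 0 ≤ s → s ≤ t → lam t ≤ lam s) ∧
        (∀ t : ℝ, 0 ≤ t → 0 ≤ lam t ∧ lam t ≤ 1) ∧
        (∀ t : ℝ, 0 < t → lam t < 1) ∧
        (∀ x y : X, dist (f x) (f y) ≤ lam (dist x y) * dist x y)),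
      -- (ii) f is a φ-contraction for a concave strictly increasing φ with φ(t) < t for t > 0
      (∃ φ : ℝ → ℝ,
        ConcaveOn ℝ (Set.Ici 0) φ ∧
        StrictMonoOn φ (Set.Ici 0) ∧
        (∀ t : ℝ, 0 < t → φ t < t) ∧
        (∀ x y : X, dist (f x) (f y) ≤ φ (dist x y))),
      -- (iii) uniform contraction factor away from the diagonal
      (∀ δ : ℝ, 0 < δ → ∃ lam : ℝ, lam < 1 ∧
        ∀ x y : X, δ ≤ dist x y → dist (f x) (f y) ≤ lam * dist x y)
    ] := by
  tfae_have 1 → 2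
  | ⟨lam, hmono, hbdd, hlt, hcon⟩ => by
    classical
    set m : ℝ → ℝ := fun s => if s ≤ 0 then 1 else (1 + lam s) / 2 with hm_def
    have hm_le_one : ∀ s, m s ≤ 1 := by
      intro s
      by_cases hs : s ≤ 0
      · simp [hm_def, hs]
      · have := (hbdd s (le_of_lt (not_le.1 hs))).2
        simp only [hm_def, hs, if_false]
        linarith
    have hm_half : ∀ s, (1:ℝ)/2 ≤ m s := by
      intro s
      by_cases hs : s ≤ 0
      · simp [hm_def, hs]; norm_num
      · have := (hbdd s (le_of_lt (not_le.1 hs))).1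
        simp only [hm_def, hs, if_false]
        linarith
    have hm_anti : Antitone m := by
      intro s t hst
      by_cases hs : s ≤ 0
      · simp only [hm_def, hs, if_true]
        exact hm_le_one t
      · have hs' : 0 < s := not_le.1 hs
        have ht : ¬ t ≤ 0 := by linarith
        simp only [hm_def, hs, ht, if_false]
        have := hmono s t (le_of_lt hs') hst
        linarith
    set φ : ℝ → ℝ := fun t => ∫ s in (0:ℝ)..t, m s with hφ_def
    have hInt : ∀ a b : ℝ, IntervalIntegrable m MeasureTheory.volume a b :=
      fun a b => hm_anti.intervalIntegrable
    have hφ_smono : StrictMono φ := by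
      intro a b hab
      have h1 : (∫ s in a..b, m b) ≤ ∫ s in a..b, m s :=
        intervalIntegral.integral_mono_on (le_of_lt hab)
          (intervalIntegrable_const) (hInt a b) (fun s hs => hm_anti hs.2)
      have h2 : (∫ s in a..b, m b) = (b - a) * m b := by
        simp [intervalIntegral.integral_const, smul_eq_mul]
      have h3 : 0 < (b - a) * m b := by
        have := hm_half b
        nlinarith
      have h4 : φ b - φ a = ∫ s in a..b, m s := by
        rw [hφ_def]
        simp only
        rw [← intervalIntegral.integral_add_adjacent_intervals (hInt 0 a) (hInt a b)]
        ring
      linarith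
    refine ⟨φ, concaveOn_integral_antitone hm_anti, hφ_smono.strictMonoOn _, ?_, ?_⟩
    · -- φ t < t for t > 0
      intro t ht
      have hsplit : φ t = (∫ s in (0:ℝ)..(t/2), m s) + ∫ s in (t/2)..t, m s := by
        rw [hφ_def]
        simp only
        rw [intervalIntegral.integral_add_adjacent_intervals (hInt 0 (t/2)) (hInt (t/2) t)]
      have hb1 : (∫ s in (0:ℝ)..(t/2), m s) ≤ ∫ s in (0:ℝ)..(t/2), (1:ℝ) :=
        intervalIntegral.integral_mono_on (by linarith) (hInt 0 (t/2))
          (intervalIntegrable_const) (fun s _ => hm_le_one s)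
      have hb1' : (∫ s in (0:ℝ)..(t/2), (1:ℝ)) = t/2 := by
        rw [intervalIntegral.integral_const]
        norm_num
      have hb2 : (∫ s in (t/2)..t, m s) ≤ ∫ s in (t/2)..t, m (t/2) :=
        intervalIntegral.integral_mono_on (by linarith) (hInt (t/2) t)
          (intervalIntegrable_const) (fun s hs => hm_anti hs.1)
      have hb2' : (∫ s in (t/2)..t, m (t/2)) = (t/2) * m (t/2) := by
        rw [intervalIntegral.integral_const, smul_eq_mul]
        ring
      have hmt : m (t/2) < 1 := by
        have ht2 : ¬ (t/2 ≤ 0) := by linarith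
        have := hlt (t/2) (by linarith)
        simp only [hm_def, ht2, if_false]
        linarith
      have ht2 : 0 < t/2 := by linarith
      calc φ t = (∫ s in (0:ℝ)..(t/2), m s) + ∫ s in (t/2)..t, m s := hsplit
        _ ≤ (∫ s in (0:ℝ)..(t/2), (1:ℝ)) + ∫ s in (t/2)..t, m (t/2) := add_le_add hb1 hb2
        _ = t/2 + (t/2) * m (t/2) := by rw [hb1', hb2']
        _ < t/2 + (t/2) * 1 := by
            have := mul_lt_mul_of_pos_left hmt ht2
            linarith
        _ = t := by ring
    · -- contraction property
      intro x y
      rcases eq_or_lt_of_le (dist_nonneg : (0:ℝ) ≤ dist x y) with heq | hlt'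
      · have hxy : x = y := dist_eq_zero.1 heq.symm
        have hφ0 : φ 0 = 0 := by simp [hφ_def]
        subst hxy
        simp [hφ0]
      · -- d > 0
        set d := dist x y with hd
        have hstep : dist (f x) (f y) ≤ lam d * d := hcon x y
        have hle : lam d * d ≤ φ d := by
          have hmono' : ∀ s ∈ Set.Icc (0:ℝ) d, lam d ≤ m s := by
            intro s hs
            by_cases hs0 : s ≤ 0
            · simp only [hm_def, hs0, if_true]
              exact (hbdd d (le_of_lt hlt')).2
            · have hs' : 0 < s := not_le.1 hs0
              simp only [hm_def, hs0, if_false]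
              have h1 := hmono s d (le_of_lt hs') hs.2
              have h2 := (hbdd s (le_of_lt hs')).2
              linarith
          have := intervalIntegral.integral_mono_on (le_of_lt hlt')
            (intervalIntegrable_const (c := lam d)) (hInt 0 d) hmono'
          have hconst : (∫ _ in (0:ℝ)..d, lam d) = d * lam d := by
            simp [intervalIntegral.integral_const, smul_eq_mul]
          rw [hφ_def]
          simp only
          calc lam d * d = d * lam d := by ring
            _ = ∫ _ in (0:ℝ)..d, lam d := hconst.symm
            _ ≤ ∫ s in (0:ℝ)..d, m s := this
        linarith
  tfae_have 2 → 3
  | ⟨φ, hconc, hsmono, hlt, hcon⟩ => by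
    intro δ hδ
    rcases isEmpty_or_nonempty X with hX | hX
    · exact ⟨0, by norm_num, fun x _ _ => (hX.false x).elim⟩
    · obtain ⟨x0⟩ := hX
      have hφ0 : 0 ≤ φ 0 := by
        have := hcon x0 x0
        simpa using this
      refine ⟨φ δ / δ, by rw [div_lt_one hδ]; exact hlt δ hδ, fun x y hdist => ?_⟩
      set d := dist x y with hd
      have hδd : δ ≤ d := hdist
      have hd0 : 0 < d := lt_of_lt_of_le hδ hδd
      have hkey : φ d ≤ (φ δ / δ) * d := by
        rcases eq_or_lt_of_le hδd with heq | hlt'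
        · rw [← heq]
          rw [div_mul_cancel₀ _ (ne_of_gt hδ)]
        · -- δ < d; use concavity: δ = a·0 + b·d with b = δ/d
          have hb0 : 0 < δ / d := div_pos hδ hd0
          have hb1 : δ / d < 1 := (div_lt_one hd0).2 hlt'
          have := hconc.2 (Set.mem_Ici.2 le_rfl) (Set.mem_Ici.2 (le_of_lt hd0))
            (by linarith : (0:ℝ) ≤ 1 - δ/d) (le_of_lt hb0) (by ring)
          simp only [smul_eq_mul, mul_zero, zero_add] at this
          have harg : δ / d * d = δ := div_mul_cancel₀ _ (ne_of_gt hd0)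
          rw [harg] at this
          -- this : (1 - δ/d) * φ 0 + δ/d * φ d ≤ φ δ
          rw [div_mul_eq_mul_div, le_div_iff₀ hδ]
          have h1 : (1 - δ/d) * φ 0 ≥ 0 :=
            mul_nonneg (by linarith) hφ0
          have h2 : δ / d * φ d ≤ φ δ := by linarith
          have h3 : d * (δ / d * φ d) ≤ d * φ δ :=
            mul_le_mul_of_nonneg_left h2 (le_of_lt hd0)
          have h4 : d * (δ / d * φ d) = φ d * δ := by
            field_simp
          calc φ d * δ = d * (δ / d * φ d) := h4.symm
            _ ≤ d * φ δ := h3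
            _ = φ δ * d := by ring
      calc dist (f x) (f y) ≤ φ d := hcon x y
        _ ≤ (φ δ / δ) * d := hkey
  tfae_have 3 → 1
  | h => by
    classical
    set S : ℝ → Set ℝ := fun t =>
      insert 0 {r | ∃ x y : X, t ≤ dist x y ∧ r = dist (f x) (f y) / dist x y} with hS_def
    have hub : ∀ t : ℝ, 0 < t → ∃ c : ℝ, c < 1 ∧ ∀ r ∈ S t, r ≤ c := by
      intro t ht
      obtain ⟨c, hc1, hc2⟩ := h t ht
      refine ⟨max c 0, by simp [hc1], fun r hr => ?_⟩
      rcases hr with hr | ⟨x, y, hxy, hr⟩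
      · simp [hr]
      · have hdpos : 0 < dist x y := lt_of_lt_of_le ht hxy
        have := hc2 x y hxy
        rw [hr, div_le_iff₀ hdpos]
        calc dist (f x) (f y) ≤ c * dist x y := this
          _ ≤ max c 0 * dist x y :=
            mul_le_mul_of_nonneg_right (le_max_left _ _) (le_of_lt hdpos)
    set lam : ℝ → ℝ := fun t => if t ≤ 0 then 1 else sSup (S t) with hlam_def
    have hbddS : ∀ t : ℝ, 0 < t → BddAbove (S t) := by
      intro t ht
      obtain ⟨c, _, hc⟩ := hub t ht
      exact ⟨c, hc⟩
    have hne : ∀ t : ℝ, (S t).Nonempty := fun t => ⟨0, Set.mem_insert 0 _⟩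
    have hlam_lt1 : ∀ t : ℝ, 0 < t → lam t < 1 := by
      intro t ht
      obtain ⟨c, hc1, hc⟩ := hub t ht
      have : sSup (S t) ≤ c := csSup_le (hne t) hc
      simp only [hlam_def, not_le.2 ht, if_neg (not_le.2 ht)]
      linarith
    have hlam_nonneg : ∀ t : ℝ, 0 ≤ lam t := by
      intro t
      by_cases ht : t ≤ 0
      · simp [hlam_def, ht]
      · have ht' : 0 < t := not_le.1 ht
        simp only [hlam_def, ht, if_false]
        exact le_csSup (hbddS t ht') (Set.mem_insert 0 _)
    have hlam_le1 : ∀ t : ℝ, lam t ≤ 1 := by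
      intro t
      by_cases ht : t ≤ 0
      · simp [hlam_def, ht]
      · exact le_of_lt (hlam_lt1 t (not_le.1 ht))
    refine ⟨lam, ?_, fun t _ => ⟨hlam_nonneg t, hlam_le1 t⟩, hlam_lt1, ?_⟩
    · -- antitone
      intro s t hs hst
      by_cases hs0 : s ≤ 0
      · have : lam s = 1 := by simp [hlam_def, hs0]
        rw [this]
        exact hlam_le1 t
      · have hs' : 0 < s := not_le.1 hs0
        have ht' : 0 < t := lt_of_lt_of_le hs' hst
        simp only [hlam_def, if_neg (not_le.2 hs'), if_neg (not_le.2 ht')]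
        apply csSup_le_csSup (hbddS s hs') (hne t)
        intro r hr
        rcases hr with hr | ⟨x, y, hxy, hr⟩
        · exact Or.inl hr
        · exact Or.inr ⟨x, y, le_trans hst hxy, hr⟩
    · -- contraction
      intro x y
      rcases eq_or_lt_of_le (dist_nonneg : (0:ℝ) ≤ dist x y) with heq | hlt'
      · have hxy : x = y := dist_eq_zero.1 heq.symm
        subst hxy
        simp [hlam_nonneg]
      · set d := dist x y with hd
        have hmem : dist (f x) (f y) / d ∈ S d :=
          Set.mem_insert_iff.2 (Or.inr ⟨x, y, le_refl _, rfl⟩)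
        have hle : dist (f x) (f y) / d ≤ sSup (S d) := le_csSup (hbddS d hlt') hmem
        have hlamd : lam d = sSup (S d) := by
          simp [hlam_def, not_le.2 hlt']
        rw [hlamd]
        calc dist (f x) (f y) = (dist (f x) (f y) / d) * d :=
              (div_mul_cancel₀ _ (ne_of_gt hlt')).symm
          _ ≤ sSup (S d) * d := mul_le_mul_of_nonneg_right hle (le_of_lt hlt')
  tfae_finish
end

section
/- If φ : [0,∞) → [0,∞) is of the form φ(t) = λ(t)·t for some nonincreasing λ : [0,∞) → [0,1] with λ(t) < 1 for t > 0, then there exists a concave strictly increasing function ψ : [0,∞) → [0,∞) such that φ(t) ≤ ψ(t) < t for all t > 0. -/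
/-- A Rakotch comparison function φ(t) = λ(t)·t can be dominated by a concave
strictly increasing function ψ with φ(t) ≤ ψ(t) < t for t > 0. -/
theorem rakotch_comparison_upgrade (lam : ℝ → ℝ)
    (hmono : ∀ s t : ℝ, 0 ≤ s → s ≤ t → lam t ≤ lam s)
    (hrange : ∀ t : ℝ, 0 ≤ t → 0 ≤ lam t ∧ lam t ≤ 1)
    (hlt : ∀ t : ℝ, 0 < t → lam t < 1) :
    ∃ ψ : ℝ → ℝ,
      ConcaveOn ℝ (Set.Ici 0) ψ ∧
      StrictMonoOn ψ (Set.Ici 0) ∧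
      (∀ t : ℝ, 0 ≤ t → 0 ≤ ψ t) ∧
      (∀ t : ℝ, 0 < t → lam t * t ≤ ψ t ∧ ψ t < t) := by
  set μ : ℝ → ℝ := fun s => (1 + lam (max s 0)) / 2 with hμdef
  have hμ_anti : Antitone μ := by
    intro s t hst
    have h1 : (0:ℝ) ≤ max s 0 := le_max_right _ _
    have h2 : max s 0 ≤ max t 0 := max_le_max hst le_rfl
    have := hmono _ _ h1 h2
    simp only [hμdef]
    linarith
  have hμ_int : ∀ a b : ℝ, IntervalIntegrable μ MeasureTheory.volume a b :=
    fun a b => hμ_anti.intervalIntegrable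
  have hμ_le_one : ∀ s : ℝ, μ s ≤ 1 := by
    intro s
    have := (hrange _ (le_max_right s 0)).2
    simp only [hμdef]; linarith
  have hμ_half : ∀ s : ℝ, (1:ℝ)/2 ≤ μ s := by
    intro s
    have := (hrange _ (le_max_right s 0)).1
    simp only [hμdef]; linarith
  have hμ_pos : ∀ t : ℝ, 0 < t → μ t < 1 := by
    intro t ht
    have hm : max t 0 = t := max_eq_left ht.le
    have := hlt t ht
    simp only [hμdef, hm]; linarith
  set ψ : ℝ → ℝ := fun t => ∫ s in (0:ℝ)..t, μ s with hψdef
  have key_lb : ∀ a b : ℝ, a ≤ b → (b - a) * μ b ≤ ∫ s in a..b, μ s := by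
    intro a b hab
    have h := intervalIntegral.integral_mono_on hab
      (intervalIntegrable_const (c := μ b)) (hμ_int a b)
      (fun x hx => hμ_anti hx.2)
    rwa [intervalIntegral.integral_const, smul_eq_mul] at h
  have key_ub : ∀ a b : ℝ, a ≤ b → (∫ s in a..b, μ s) ≤ (b - a) * μ a := by
    intro a b hab
    have h := intervalIntegral.integral_mono_on hab (hμ_int a b)
      (intervalIntegrable_const (c := μ a))
      (fun x hx => hμ_anti hx.1)
    rwa [intervalIntegral.integral_const, smul_eq_mul] at h
  have hadd : ∀ a b : ℝ, ψ b - ψ a = ∫ s in a..b, μ s := by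
    intro a b
    have := intervalIntegral.integral_add_adjacent_intervals (hμ_int 0 a) (hμ_int a b)
    simp only [hψdef]
    linarith
  refine ⟨ψ, ?_, ?_, ?_, ?_⟩
  · refine concaveOn_of_slope_anti_adjacent (convex_Ici 0) ?_
    intro x y z _ _ hxy hyz
    have h1 : (y - x) * μ y ≤ ψ y - ψ x := (hadd x y) ▸ key_lb x y hxy.le
    have h2 : ψ z - ψ y ≤ (z - y) * μ y := (hadd y z) ▸ key_ub y z hyz.le
    rw [div_le_div_iff₀ (by linarith) (by linarith)]
    nlinarith [hμ_half y]
  · intro x _ y _ hxy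
    have h1 : (y - x) * μ y ≤ ψ y - ψ x := (hadd x y) ▸ key_lb x y hxy.le
    nlinarith [hμ_half y]
  · intro t ht
    have h1 : (t - 0) * μ t ≤ ψ t - ψ 0 := (hadd 0 t) ▸ key_lb 0 t ht
    have h0 : ψ 0 = 0 := by simp [hψdef]
    nlinarith [hμ_half t]
  · intro t ht
    constructor
    · have h1 : (t - 0) * μ t ≤ ψ t - ψ 0 := (hadd 0 t) ▸ key_lb 0 t ht.le
      have h0 : ψ 0 = 0 := by simp [hψdef]
      have hm : max t 0 = t := max_eq_left ht.le
      have hμt : μ t = (1 + lam t) / 2 := by simp only [hμdef, hm]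
      have := (hrange t ht.le).2
      nlinarith
    · have h0 : ψ 0 = 0 := by simp [hψdef]
      have ht2 : (0:ℝ) < t/2 := by linarith
      have h1 : ψ (t/2) - ψ 0 ≤ (t/2 - 0) * μ 0 := (hadd 0 (t/2)) ▸ key_ub 0 (t/2) ht2.le
      have h2 : ψ t - ψ (t/2) ≤ (t - t/2) * μ (t/2) := (hadd (t/2) t) ▸ key_ub (t/2) t (by linarith)
      have h3 : μ (t/2) < 1 := hμ_pos _ ht2
      have h4 : μ 0 ≤ 1 := hμ_le_one 0
      nlinarith
end

section
/- Let X be a metric space and let the IFS F = {w₁,...,w_N} consist of self-maps each of which is a φ-contraction for a common nondecreasing function φ : [0,∞) → [0,∞). Then the induced Hutchinson operator F(K) = ⋃ᵢ wᵢ(K) on the hyperspace K(X) of nonempty compact subsets, equipped with the Hausdorff metric, is itself a φ-contraction. -/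
/-- If all maps of an IFS are φ-contractions for a common nondecreasing φ, then the
Hutchinson operator is a φ-contraction with respect to the Hausdorff metric on
nonempty compact subsets. -/
theorem hutchinson_phi_contraction {X : Type*} [MetricSpace X] {N : ℕ} (hN : 0 < N)
    (w : Fin N → X → X) (φ : ℝ → ℝ)
    (hφmono : ∀ s t : ℝ, 0 ≤ s → s ≤ t → φ s ≤ φ t)
    (hw : ∀ i : Fin N, ∀ x y : X, dist (w i x) (w i y) ≤ φ (dist x y)) :
    ∀ K S : Set X, K.Nonempty → IsCompact K → S.Nonempty → IsCompact S →
      Metric.hausdorffDist (⋃ i, w i '' K) (⋃ i, w i '' S) ≤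
        φ (Metric.hausdorffDist K S) := by
  intro K S hKne hKc hSne hSc
  set r := Metric.hausdorffDist K S with hr
  have hr0 : 0 ≤ r := Metric.hausdorffDist_nonneg
  have hedist : EMetric.hausdorffEdist K S ≠ ⊤ :=
    Metric.hausdorffEdist_ne_top_of_nonempty_of_bounded hKne hSne hKc.isBounded hSc.isBounded
  have hφ0 : 0 ≤ φ r := by
    obtain ⟨i⟩ : Nonempty (Fin N) := Fin.pos_iff_nonempty.mp hN
    obtain ⟨x, _⟩ := hKne
    have h1 : dist (w i x) (w i x) ≤ φ (dist x x) := hw i x x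
    simp only [dist_self] at h1
    exact h1.trans (hφmono 0 r le_rfl hr0)
  apply Metric.hausdorffDist_le_of_mem_dist hφ0
  · rintro x hx
    simp only [Set.mem_iUnion, Set.mem_image] at hx
    obtain ⟨i, k, hk, rfl⟩ := hx
    obtain ⟨y, hy, hdy⟩ := hSc.exists_infDist_eq_dist hSne k
    have hle : dist k y ≤ r := by
      rw [← hdy]
      exact Metric.infDist_le_hausdorffDist_of_mem hk hedist
    refine ⟨w i y, ?_, ?_⟩
    · exact Set.mem_iUnion.2 ⟨i, Set.mem_image_of_mem _ hy⟩
    · exact (hw i k y).trans (hφmono _ _ dist_nonneg hle)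
  · rintro x hx
    simp only [Set.mem_iUnion, Set.mem_image] at hx
    obtain ⟨i, s, hs, rfl⟩ := hx
    obtain ⟨y, hy, hdy⟩ := hKc.exists_infDist_eq_dist hKne s
    have hle : dist s y ≤ r := by
      rw [← hdy]
      rw [hr, Metric.hausdorffDist_comm]
      exact Metric.infDist_le_hausdorffDist_of_mem hs (by rwa [EMetric.hausdorffEdist_comm])
    refine ⟨w i y, ?_, ?_⟩
    · exact Set.mem_iUnion.2 ⟨i, Set.mem_image_of_mem _ hy⟩
    · exact (hw i s y).trans (hφmono _ _ dist_nonneg hle)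
end

section
/- Let X be a complete separable perfect metric space. The collection of sets K ∈ K(X) that arise as attractors of some weakly contractive IFS (a finite family of Rakotch contractions) is of the first Baire category in the hyperspace K(X) with the Hausdorff metric. -/
open Metric Set Filter TopologicalSpace

section Helpers

variable {X : Type*} [MetricSpace X]

/-- In a space without isolated points, every ball contains a point avoiding any
given finite set. -/
lemma exists_point_avoiding (hX : ∀ x : X, (nhdsWithin x {x}ᶜ).NeBot) (x : X) {r : ℝ}
    (hr : 0 < r) (s : Finset X) : ∃ y : X, dist y x < r ∧ y ∉ s := by
  classical
  set t := s.erase x with ht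
  by_cases hne : t.Nonempty
  · set r' := min r (t.inf' hne fun z => dist x z) with hr'
    have hr'pos : 0 < r' := by
      refine lt_min hr ?_
      rw [Finset.lt_inf'_iff]
      intro z hz
      have hzx : z ≠ x := Finset.ne_of_mem_erase hz
      exact dist_pos.mpr (Ne.symm hzx)
    have hmem : (ball x r' ∩ {x}ᶜ).Nonempty := by
      haveI := hX x
      exact Filter.nonempty_of_mem (Filter.inter_mem
        (mem_nhdsWithin_of_mem_nhds (ball_mem_nhds x hr'pos)) self_mem_nhdsWithin)
    obtain ⟨y, hy1, hy2⟩ := hmem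
    refine ⟨y, lt_of_lt_of_le (mem_ball.mp hy1) (min_le_left _ _), ?_⟩
    intro hys
    have hyt : y ∈ t := Finset.mem_erase.mpr ⟨hy2, hys⟩
    have h1 : r' ≤ dist x y := le_trans (min_le_right _ _) (Finset.inf'_le _ hyt)
    have h2 : dist y x < r' := mem_ball.mp hy1
    rw [dist_comm] at h2
    linarith
  · have hmem : (ball x r ∩ {x}ᶜ).Nonempty := by
      haveI := hX x
      exact Filter.nonempty_of_mem (Filter.inter_mem
        (mem_nhdsWithin_of_mem_nhds (ball_mem_nhds x hr)) self_mem_nhdsWithin)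
    obtain ⟨y, hy1, hy2⟩ := hmem
    refine ⟨y, mem_ball.mp hy1, fun hys => ?_⟩
    exact hne ⟨y, Finset.mem_erase.mpr ⟨hy2, hys⟩⟩

/-- In a space without isolated points one can find arbitrarily many points in any ball. -/
lemma exists_cluster (hX : ∀ x : X, (nhdsWithin x {x}ᶜ).NeBot) (x : X) {r : ℝ}
    (hr : 0 < r) (m : ℕ) : ∃ C : Finset X, C.card = m ∧ ∀ p ∈ C, dist p x < r := by
  classical
  induction m with
  | zero => exact ⟨∅, rfl, by simp⟩
  | succ n ih =>
    obtain ⟨C, hcard, hdist⟩ := ih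
    obtain ⟨y, hy1, hy2⟩ := exists_point_avoiding hX x hr C
    refine ⟨insert y C, ?_, ?_⟩
    · rw [Finset.card_insert_of_notMem hy2, hcard]
    · intro p hp
      rcases Finset.mem_insert.mp hp with h | h
      · subst h; exact hy1
      · exact hdist p h

/-- A tower of clusters: finitely many finite clusters around prescribed centers, with
prescribed cardinalities, such that later clusters are at much smaller internal scales
than the internal separations of earlier clusters. -/
lemma build_tower (hX : ∀ x : X, (nhdsWithin x {x}ᶜ).NeBot) :
    ∀ (k : ℕ) (r : ℝ), 0 < r → ∀ (v : Fin k → X) (m : Fin k → ℕ), (∀ i, 2 ≤ m i) →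
    ∃ C : Fin k → Finset X,
      (∀ i, (C i).card = m i) ∧
      (∀ i, ∀ p ∈ C i, dist p (v i) < r) ∧
      (∀ i j : Fin k, i < j → ∀ p ∈ C j, ∀ p' ∈ C j, ∀ q ∈ C i, ∀ q' ∈ C i, q ≠ q' →
          50 * dist p p' < dist q q') := by
  classical
  intro k
  induction k with
  | zero =>
    intro r hr v m hm
    exact ⟨fun i => i.elim0, fun i => i.elim0, fun i => i.elim0, fun i => i.elim0⟩
  | succ n ih =>
    intro r hr v m hm
    obtain ⟨C₀, hC₀card, hC₀dist⟩ := exists_cluster hX (v 0) (half_pos hr) (m 0)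
    have hC₀nontriv : (C₀.offDiag).Nonempty := by
      obtain ⟨p, hp, q, hq, hne⟩ := Finset.one_lt_card.mp
        (show 1 < C₀.card by rw [hC₀card]; exact lt_of_lt_of_le one_lt_two (hm 0))
      exact ⟨(p, q), Finset.mem_offDiag.mpr ⟨hp, hq, hne⟩⟩
    set σ := C₀.offDiag.inf' hC₀nontriv (fun pq => dist pq.1 pq.2) with hσ
    have hσpos : 0 < σ := by
      obtain ⟨pq, hpq, hval⟩ := Finset.exists_mem_eq_inf' hC₀nontriv (fun pq => dist pq.1 pq.2)
      rw [hσ, hval]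
      rcases Finset.mem_offDiag.mp hpq with ⟨_, _, hne⟩
      exact dist_pos.mpr hne
    have hσle : ∀ q ∈ C₀, ∀ q' ∈ C₀, q ≠ q' → σ ≤ dist q q' := by
      intro q hq q' hq' hne
      rw [hσ]
      exact Finset.inf'_le (fun pq => dist pq.1 pq.2)
        (show (q, q') ∈ C₀.offDiag from Finset.mem_offDiag.mpr ⟨hq, hq', hne⟩)
    set r' := min (σ / 200) (r / 2) with hr'def
    have hr'pos : 0 < r' := lt_min (by positivity) (half_pos hr)
    obtain ⟨C', hcard', hdist', hband'⟩ := ih r' hr'pos (fun i => v i.succ) (fun i => m i.succ)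
      (fun i => hm i.succ)
    refine ⟨Fin.cases C₀ C', ?_, ?_, ?_⟩
    · intro i
      induction i using Fin.cases with
      | zero => simpa using hC₀card
      | succ i => simpa using hcard' i
    · intro i
      induction i using Fin.cases with
      | zero =>
        intro p hp
        simp only [Fin.cases_zero] at hp
        exact lt_trans (hC₀dist p hp) (half_lt_self hr)
      | succ i =>
        intro p hp
        simp only [Fin.cases_succ] at hp
        have h1 : dist p (v i.succ) < r' := hdist' i p hp
        have h2 : r' ≤ r / 2 := min_le_right _ _
        have h3 : r / 2 < r := half_lt_self hr
        linarith
    · intro i j hij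
      induction j using Fin.cases with
      | zero => exact absurd hij (Fin.not_lt_zero i)
      | succ j =>
        induction i using Fin.cases with
        | zero =>
          intro p hp p' hp' q hq q' hq' hne
          simp only [Fin.cases_succ] at hp hp'
          simp only [Fin.cases_zero] at hq hq'
          have h1 : dist p (v j.succ) < r' := hdist' j p hp
          have h2 : dist p' (v j.succ) < r' := hdist' j p' hp'
          have h3 : dist p p' ≤ dist p (v j.succ) + dist p' (v j.succ) := dist_triangle_right _ _ _
          have h4 : σ ≤ dist q q' := hσle q hq q' hq' hne
          have h5 : r' ≤ σ / 200 := min_le_left _ _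
          linarith
        | succ i =>
          intro p hp p' hp' q hq q' hq' hne
          simp only [Fin.cases_succ] at hp hp' hq hq'
          exact hband' i j (Fin.succ_lt_succ_iff.mp hij) p hp p' hp' q hq q' hq' hne

/-- A strictly distance-decreasing self-map of a nonempty compact set has a fixed point. -/
lemma exists_fixed_point {Q : Set X} (hQ : IsCompact Q) (hne : Q.Nonempty) {f : X → X}
    (hstrict : ∀ x y : X, x ≠ y → dist (f x) (f y) < dist x y) (hmaps : Set.MapsTo f Q Q) :
    ∃ z ∈ Q, f z = z := by
  have hlip : LipschitzWith 1 f := by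
    rw [lipschitzWith_iff_dist_le_mul]
    intro x y
    rcases eq_or_ne x y with rfl | hne'
    · simp
    · have h := le_of_lt (hstrict x y hne')
      simpa using h
  have hcont : Continuous fun x => dist x (f x) := continuous_id.dist hlip.continuous
  obtain ⟨z, hzQ, hzmin⟩ := hQ.exists_isMinOn hne hcont.continuousOn
  refine ⟨z, hzQ, ?_⟩
  by_contra hfz
  have hzne : z ≠ f z := fun h => hfz h.symm
  have h1 : dist (f z) (f (f z)) < dist z (f z) := hstrict z (f z) hzne
  have h2 : dist z (f z) ≤ dist (f z) (f (f z)) := hzmin (hmaps hzQ)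
  linarith

/-- The arithmetic behind the counting argument. -/
lemma key_count (N Fc : ℕ) (a : ℕ) :
    N * (Fc + (Finset.range a).sum (fun i => (N * (Fc + N + 2) + 2) ^ (i + 1)) + (N + 1))
      < (N * (Fc + N + 2) + 2) ^ (a + 1) := by
  set B := N * (Fc + N + 2) + 2 with hB
  have hBeq : B = N * Fc + N * N + 2 * N + 2 := by rw [hB]; ring
  have hBge : N + 1 ≤ B := by omega
  induction a with
  | zero =>
    have h1 : (Finset.range 0).sum (fun i => B ^ (i + 1)) = 0 := rfl
    have h2 : B ^ (0 + 1) = B := by norm_num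
    rw [h1, h2]
    have h3 : N * (Fc + 0 + (N + 1)) = N * Fc + N * N + N := by ring
    omega
  | succ n ihn =>
    rw [Finset.sum_range_succ]
    have h1 : N * (Fc + ((Finset.range n).sum (fun i => B ^ (i + 1)) + B ^ (n + 1)) + (N + 1))
        = N * (Fc + (Finset.range n).sum (fun i => B ^ (i + 1)) + (N + 1)) + N * B ^ (n + 1) := by
      ring
    rw [h1]
    have h2 : N * (Fc + (Finset.range n).sum (fun i => B ^ (i + 1)) + (N + 1)) + N * B ^ (n + 1)
        < B ^ (n + 1) + N * B ^ (n + 1) := by omega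
    refine lt_of_lt_of_le h2 ?_
    have h3 : B ^ (n + 1) + N * B ^ (n + 1) = (N + 1) * B ^ (n + 1) := by ring
    have h4 : (N + 1) * B ^ (n + 1) ≤ B * B ^ (n + 1) := Nat.mul_le_mul_right _ hBge
    have h5 : B * B ^ (n + 1) = B ^ (n + 1 + 1) := by ring
    omega

end Helpers

section Core

variable {X : Type*} [MetricSpace X]

set_option maxHeartbeats 1600000 in
/-- Core construction: arbitrarily Hausdorff-close to any compact set there is a finite set `L`
and a radius `ε'` such that no compact set within `ε'` of `L` is invariant under a system of
`N` strictly distance-decreasing maps. -/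
lemma core_lemma (hX : ∀ x : X, (nhdsWithin x {x}ᶜ).NeBot)
    {K₀ : Set X} (hK₀c : IsCompact K₀) (hK₀ne : K₀.Nonempty) (N : ℕ) {ε : ℝ} (hε : 0 < ε) :
    ∃ L : Finset X, (L : Set X).Nonempty ∧ Metric.hausdorffDist (L : Set X) K₀ < ε ∧
      ∃ ε' : ℝ, 0 < ε' ∧
        ∀ K' : Set X, IsCompact K' → K'.Nonempty → Metric.hausdorffDist K' (L : Set X) < ε' →
          ∀ w : Fin N → X → X, (∀ i, ∀ x y : X, x ≠ y → dist (w i x) (w i y) < dist x y) →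
            (⋃ i, w i '' K') ≠ K' := by
  classical
  obtain ⟨x₀, hx₀⟩ := hK₀ne
  rcases Nat.eq_zero_or_pos N with hN0 | hN
  · -- trivial case `N = 0`
    subst hN0
    obtain ⟨t, htK, htfin, htcov⟩ := hK₀c.finite_cover_balls (show (0:ℝ) < ε/2 by linarith)
    have hTK : ∀ z ∈ htfin.toFinset, z ∈ K₀ := by
      intro z hz; exact htK (htfin.mem_toFinset.mp hz)
    have hTne : ((htfin.toFinset : Finset X) : Set X).Nonempty := by
      have h1 := htcov hx₀
      rw [Set.mem_iUnion₂] at h1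
      obtain ⟨c, hc, _⟩ := h1
      exact ⟨c, htfin.mem_toFinset.mpr hc⟩
    refine ⟨htfin.toFinset, hTne, ?_, 1, one_pos, ?_⟩
    · refine lt_of_le_of_lt
        (hausdorffDist_le_of_mem_dist (le_of_lt (half_pos hε)) ?_ ?_) (half_lt_self hε)
      · intro z hz
        exact ⟨z, hTK z hz, by simp; linarith⟩
      · intro y hy
        have h1 := htcov hy
        rw [Set.mem_iUnion₂] at h1
        obtain ⟨c, hc, hyc⟩ := h1
        exact ⟨c, htfin.mem_toFinset.mpr hc, le_of_lt (mem_ball.mp hyc)⟩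
    · intro K' hK'c hK'ne _ w _
      have h1 : (⋃ i : Fin 0, w i '' K') = ∅ := Set.iUnion_of_empty _
      rw [h1]
      exact fun h => hK'ne.ne_empty h.symm
  · -- main case : `1 ≤ N`
    obtain ⟨t0, ht0K, ht0fin, ht0cov⟩ := hK₀c.finite_cover_balls (show (0:ℝ) < ε/8 by linarith)
    set T : Finset X := ht0fin.toFinset with hTdef
    have hTK : ∀ z ∈ T, z ∈ K₀ := fun z hz => ht0K (ht0fin.mem_toFinset.mp hz)
    have hTcov : ∀ y ∈ K₀, ∃ z ∈ T, dist y z < ε/8 := by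
      intro y hy
      have h1 := ht0cov hy
      rw [Set.mem_iUnion₂] at h1
      obtain ⟨c, hc, hyc⟩ := h1
      exact ⟨c, ht0fin.mem_toFinset.mpr hc, mem_ball.mp hyc⟩
    set F : Finset X := T.filter (fun z => ε/2 ≤ dist z x₀) with hFdef
    have hFK : ∀ z ∈ F, z ∈ K₀ := fun z hz => hTK z (Finset.mem_filter.mp hz).1
    have hFfar : ∀ z ∈ F, ε/2 ≤ dist z x₀ := fun z hz => (Finset.mem_filter.mp hz).2
    -- satellites
    obtain ⟨V, hVcard, hVdist⟩ := exists_cluster hX x₀ (show (0:ℝ) < ε/8 by linarith) (N+1)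
    set v : Fin (N+1) → X := fun i => ((V.equivFin.symm (finCongr hVcard.symm i)) : X) with hvdef
    have hvV : ∀ i, v i ∈ V := fun i => (V.equivFin.symm (finCongr hVcard.symm i)).2
    have hvball : ∀ i, dist (v i) x₀ < ε/8 := fun i => hVdist _ (hvV i)
    have hvinj : Function.Injective v := by
      intro i j hij
      exact (finCongr hVcard.symm).injective
        (V.equivFin.symm.injective (Subtype.coe_injective hij))
    have hod : ((Finset.univ : Finset (Fin (N+1))).offDiag).Nonempty := by
      refine ⟨((0 : Fin (N+1)), (⟨1, by omega⟩ : Fin (N+1))), ?_⟩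
      refine Finset.mem_offDiag.mpr ⟨Finset.mem_univ _, Finset.mem_univ _, ?_⟩
      intro h
      have := congrArg Fin.val h
      simp at this
    set Δp := ((Finset.univ : Finset (Fin (N+1))).offDiag).inf' hod
        (fun ab => dist (v ab.1) (v ab.2)) with hΔpdef
    have hΔppos : 0 < Δp := by
      obtain ⟨ab, hab, hval⟩ := Finset.exists_mem_eq_inf' hod
        (fun ab => dist (v ab.1) (v ab.2))
      rw [hΔpdef, hval]
      rcases Finset.mem_offDiag.mp hab with ⟨-, -, hne⟩
      exact dist_pos.mpr (fun h => hne (hvinj h))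
    have hΔple : ∀ a b : Fin (N+1), a ≠ b → Δp ≤ dist (v a) (v b) := by
      intro a b hne
      rw [hΔpdef]
      exact Finset.inf'_le (fun ab => dist (v ab.1) (v ab.2))
        (show (a, b) ∈ (Finset.univ : Finset (Fin (N+1))).offDiag from
          Finset.mem_offDiag.mpr ⟨Finset.mem_univ _, Finset.mem_univ _, hne⟩)
    set Δ := min Δp (ε/8) with hΔdef
    have hΔpos : 0 < Δ := lt_min hΔppos (by linarith)
    have hΔε : Δ ≤ ε/8 := min_le_right _ _
    have hΔle : ∀ a b : Fin (N+1), a ≠ b → Δ ≤ dist (v a) (v b) :=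
      fun a b h => le_trans (min_le_left _ _) (hΔple a b h)
    set r := Δ/100 with hrdef
    have hrpos : 0 < r := by rw [hrdef]; linarith
    set B := N * (F.card + N + 2) + 2 with hBdef
    have hm2 : ∀ i : Fin (N+1), 2 ≤ B ^ ((i:ℕ)+1) := by
      intro i
      have h1 : 2 ≤ B := by omega
      exact le_trans h1 (Nat.le_self_pow (Nat.succ_ne_zero _) B)
    obtain ⟨C, hCcard, hCdist, hband⟩ :=
      build_tower hX (N+1) r hrpos v (fun i => B ^ ((i:ℕ)+1)) hm2
    have hCne : ∀ a, (C a).Nonempty := by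
      intro a
      refine Finset.card_pos.mp ?_
      rw [hCcard]
      have := hm2 a
      omega
    set L : Finset X := F ∪ Finset.univ.biUnion C with hLdef
    have hCsubL : ∀ a, ∀ p ∈ C a, p ∈ L := fun a p hp =>
      Finset.mem_union_right _ (Finset.mem_biUnion.mpr ⟨a, Finset.mem_univ _, hp⟩)
    have hFsubL : ∀ p ∈ F, p ∈ L := fun p hp => Finset.mem_union_left _ hp
    have hmemL : ∀ p ∈ L, p ∈ F ∨ ∃ a, p ∈ C a := by
      intro p hp
      rcases Finset.mem_union.mp hp with h | h
      · exact Or.inl h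
      · obtain ⟨a, -, ha⟩ := Finset.mem_biUnion.mp h
        exact Or.inr ⟨a, ha⟩
    -- geometry
    have hCx₀ : ∀ a, ∀ p ∈ C a, dist p x₀ < ε/8 + r := by
      intro a p hp
      have h1 : dist p x₀ ≤ dist p (v a) + dist (v a) x₀ := dist_triangle _ _ _
      have h2 := hCdist a p hp
      have h3 := hvball a
      linarith
    have hrε : r ≤ ε/800 := by rw [hrdef]; linarith
    have hdisj : ∀ a b : Fin (N+1), a ≠ b → ∀ p ∈ C a, p ∉ C b := by
      intro a b hab p hpa hpb
      have h1 : dist (v a) (v b) ≤ dist p (v a) + dist p (v b) := dist_triangle_left _ _ _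
      have h2 := hCdist a p hpa
      have h3 := hCdist b p hpb
      have h4 := hΔle a b hab
      rw [hrdef] at h2 h3
      linarith
    have hsep : ∀ a : Fin (N+1), ∀ p ∈ C a, ∀ q ∈ L, q ∉ C a → Δ/2 ≤ dist p q := by
      intro a p hp q hq hqa
      rcases hmemL q hq with hqF | ⟨b, hqb⟩
      · have h1 : ε/2 ≤ dist q x₀ := hFfar q hqF
        have h2 : dist p x₀ < ε/8 + r := hCx₀ a p hp
        have h3 : dist q x₀ ≤ dist q p + dist p x₀ := dist_triangle _ _ _
        have h4 : dist p q = dist q p := dist_comm _ _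
        have h5 : Δ/2 ≤ ε/16 := by linarith
        linarith
      · have hba : b ≠ a := fun h => hqa (h ▸ hqb)
        have h4 := hΔle a b (Ne.symm hba)
        have h2 := hCdist a p hp
        have h3 := hCdist b q hqb
        have h1 : dist (v a) (v b) ≤ dist (v a) p + dist p q + dist q (v b) :=
          dist_triangle4 _ _ _ _
        rw [dist_comm (v a) p] at h1
        rw [hrdef] at h2 h3
        linarith
    have hLne : (L : Set X).Nonempty := by
      obtain ⟨p, hp⟩ := hCne 0
      exact ⟨p, hCsubL 0 p hp⟩
    have hC0two : 1 < (C 0).card := by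
      rw [hCcard]
      have := hm2 0
      omega
    have hLod : (L.offDiag).Nonempty := by
      obtain ⟨p, hp, q, hq, hne⟩ := Finset.one_lt_card.mp hC0two
      exact ⟨(p, q), Finset.mem_offDiag.mpr ⟨hCsubL 0 p hp, hCsubL 0 q hq, hne⟩⟩
    set σ := L.offDiag.inf' hLod (fun pq => dist pq.1 pq.2) with hσdef
    have hσpos : 0 < σ := by
      obtain ⟨pq, hpq, hval⟩ := Finset.exists_mem_eq_inf' hLod (fun pq => dist pq.1 pq.2)
      rw [hσdef, hval]
      rcases Finset.mem_offDiag.mp hpq with ⟨-, -, hne⟩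
      exact dist_pos.mpr hne
    have hσle : ∀ p ∈ L, ∀ q ∈ L, p ≠ q → σ ≤ dist p q := by
      intro p hp q hq hne
      rw [hσdef]
      exact Finset.inf'_le (fun pq => dist pq.1 pq.2)
        (show (p, q) ∈ L.offDiag from Finset.mem_offDiag.mpr ⟨hp, hq, hne⟩)
    have hσ2r : σ < 2*r := by
      obtain ⟨p, hp, q, hq, hne⟩ := Finset.one_lt_card.mp hC0two
      have h1 := hσle p (hCsubL 0 p hp) q (hCsubL 0 q hq) hne
      have h2 := hCdist 0 p hp
      have h3 := hCdist 0 q hq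
      have h4 : dist p q ≤ dist p (v 0) + dist q (v 0) := dist_triangle_right _ _ _
      linarith
    set ε' := σ/100 with hε'def
    have hε'pos : 0 < ε' := by rw [hε'def]; linarith
    refine ⟨L, hLne, ?_, ε', hε'pos, ?_⟩
    · -- Hausdorff distance to `K₀`
      refine lt_of_le_of_lt
        (hausdorffDist_le_of_mem_dist (show (0:ℝ) ≤ 7*ε/8 by linarith) ?_ ?_) (by linarith)
      · intro p hp
        rcases hmemL p hp with hpF | ⟨a, hpa⟩
        · exact ⟨p, hFK p hpF, by simp; linarith⟩
        · refine ⟨x₀, hx₀, ?_⟩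
          have h1 := hCx₀ a p hpa
          linarith
      · intro y hy
        obtain ⟨z, hz, hyz⟩ := hTcov y hy
        by_cases hzF : ε/2 ≤ dist z x₀
        · exact ⟨z, hFsubL z (Finset.mem_filter.mpr ⟨hz, hzF⟩), by linarith⟩
        · push_neg at hzF
          obtain ⟨p, hp⟩ := hCne 0
          refine ⟨p, hCsubL 0 p hp, ?_⟩
          have h1 : dist y p ≤ dist y z + dist z x₀ + dist x₀ p := dist_triangle4 _ _ _ _
          have h2 : dist x₀ p = dist p x₀ := dist_comm _ _
          have h3 := hCx₀ 0 p hp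
          linarith
    · -- the main implication
      intro K' hK'c hK'ne hKL w hstrict hinv
      have hfin : EMetric.hausdorffEdist K' (L : Set X) ≠ ⊤ :=
        Metric.hausdorffEdist_ne_top_of_nonempty_of_bounded hK'ne hLne
          hK'c.isBounded L.finite_toSet.isBounded
      have near : ∀ x ∈ K', ∃ p ∈ L, dist x p < ε' := by
        intro x hx
        obtain ⟨p, hp, hd⟩ := exists_dist_lt_of_hausdorffDist_lt hx hKL hfin
        exact ⟨p, hp, hd⟩
      have near' : ∀ p ∈ L, ∃ x ∈ K', dist x p < ε' := by
        intro p hp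
        obtain ⟨x, hx, hd⟩ := exists_dist_lt_of_hausdorffDist_lt'
          (show p ∈ (L : Set X) from hp) hKL hfin
        exact ⟨x, hx, hd⟩
      have hwK' : ∀ j : Fin N, ∀ x ∈ K', w j x ∈ K' := by
        intro j x hx
        have h1 : w j x ∈ ⋃ i, w i '' K' := Set.mem_iUnion.mpr ⟨j, ⟨x, hx, rfl⟩⟩
        rwa [hinv] at h1
      have hw1 : ∀ j : Fin N, ∀ x y : X, dist (w j x) (w j y) ≤ dist x y := by
        intro j x y
        rcases eq_or_ne x y with rfl | hne
        · simp
        · exact le_of_lt (hstrict j x y hne)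
      have hLuniq : ∀ p ∈ L, ∀ q ∈ L, dist p q < σ → p = q := by
        intro p hp q hq hd
        by_contra hne
        exact absurd hd (not_lt.mpr (hσle p hp q hq hne))
      set π : X → X := fun x => if h : ∃ p, p ∈ L ∧ dist x p < ε' then h.choose else x₀
        with hπdef
      have hπspec : ∀ x ∈ K', π x ∈ L ∧ dist x (π x) < ε' := by
        intro x hx
        obtain ⟨p, hp, hd⟩ := near x hx
        have hex : ∃ p, p ∈ L ∧ dist x p < ε' := ⟨p, hp, hd⟩
        rw [hπdef]
        simp only [dif_pos hex]
        exact hex.choose_spec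
      have hπuniq : ∀ x ∈ K', ∀ q ∈ L, dist x q ≤ 4*ε' → π x = q := by
        intro x hx q hq hd
        obtain ⟨h1, h2⟩ := hπspec x hx
        refine hLuniq (π x) h1 q hq ?_
        have h3 : dist (π x) q ≤ dist (π x) x + dist x q := dist_triangle _ _ _
        rw [dist_comm (π x) x] at h3
        linarith [hσpos]
      set xbar : X → X := fun p => if h : ∃ x, x ∈ K' ∧ dist x p < ε' then h.choose else x₀
        with hxdef
      have hxspec : ∀ p ∈ L, xbar p ∈ K' ∧ dist (xbar p) p < ε' := by
        intro p hp
        obtain ⟨x, hx, hd⟩ := near' p hp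
        have hex : ∃ x, x ∈ K' ∧ dist x p < ε' := ⟨x, hx, hd⟩
        rw [hxdef]
        simp only [dif_pos hex]
        exact hex.choose_spec
      set ψ : Fin N → X → X := fun j p => π (w j (xbar p)) with hψdef
      have hψL : ∀ j, ∀ p ∈ L, ψ j p ∈ L := by
        intro j p hp
        exact (hπspec _ (hwK' j _ (hxspec p hp).1)).1
      have hψd : ∀ j, ∀ p ∈ L, dist (w j (xbar p)) (ψ j p) < ε' := by
        intro j p hp
        exact (hπspec _ (hwK' j _ (hxspec p hp).1)).2
      have hblob : ∀ j, ∀ p ∈ L, ∀ y ∈ K', dist y p ≤ ε' →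
          π (w j y) = ψ j p ∧ dist (w j y) (ψ j p) < ε' := by
        intro j p hp y hy hyp
        have h0 := hxspec p hp
        have h1 : dist (w j y) (w j (xbar p)) ≤ dist y (xbar p) := hw1 j _ _
        have h2 : dist y (xbar p) ≤ dist y p + dist (xbar p) p := by
          have h := dist_triangle y p (xbar p)
          rw [dist_comm p (xbar p)] at h
          exact h
        have h3 := hψd j p hp
        have h4 : dist (w j y) (ψ j p) ≤
            dist (w j y) (w j (xbar p)) + dist (w j (xbar p)) (ψ j p) := dist_triangle _ _ _
        have h6 : π (w j y) = ψ j p := by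
          refine hπuniq _ (hwK' j _ hy) _ (hψL j p hp) ?_
          linarith [h0.2]
        refine ⟨h6, ?_⟩
        have h7 := hπspec _ (hwK' j _ hy)
        rw [h6] at h7
        exact h7.2
      have hψlip : ∀ j, ∀ p ∈ L, ∀ q ∈ L, dist (ψ j p) (ψ j q) ≤ dist p q + 4*ε' := by
        intro j p hp q hq
        have h1 := hψd j p hp
        have h2 := hψd j q hq
        have h3 : dist (xbar p) (xbar q) ≤ dist (xbar p) p + dist p q + dist q (xbar q) :=
          dist_triangle4 _ _ _ _
        have h4 : dist (w j (xbar p)) (w j (xbar q)) ≤ dist (xbar p) (xbar q) := hw1 j _ _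
        have h5 : dist (ψ j p) (ψ j q) ≤ dist (ψ j p) (w j (xbar p)) +
            dist (w j (xbar p)) (w j (xbar q)) + dist (w j (xbar q)) (ψ j q) :=
          dist_triangle4 _ _ _ _
        rw [dist_comm (ψ j p) (w j (xbar p))] at h5
        have h6 := (hxspec p hp).2
        have h7 := (hxspec q hq).2
        have h8 : dist q (xbar q) = dist (xbar q) q := dist_comm _ _
        linarith
      have hcover : ∀ p ∈ L, ∃ j : Fin N, ∃ q, q ∈ L ∧ ψ j q = p := by
        intro p hp
        obtain ⟨hxK, hxd⟩ := hxspec p hp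
        have h1 : xbar p ∈ ⋃ i, w i '' K' := hinv.symm ▸ hxK
        rw [Set.mem_iUnion] at h1
        obtain ⟨j, y, hy, hxy⟩ := h1
        have hq := hπspec y hy
        have hb := hblob j (π y) hq.1 y hy (le_of_lt hq.2)
        have hπx : π (xbar p) = p := hπuniq _ hxK p hp (by linarith)
        rw [hxy] at hb
        exact ⟨j, π y, hq.1, by rw [← hb.1, hπx]⟩
      -- every cluster admits a self-map among the `ψ j`
      have hself : ∀ a : Fin (N+1), ∃ j : Fin N, ∃ q, q ∈ C a ∧ ψ j q ∈ C a := by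
        intro a
        by_contra hno
        push_neg at hno
        have hwit : ∀ p ∈ C a, ∃ jq : Fin N × X, jq.2 ∈ L ∧ jq.2 ∉ C a ∧ ψ jq.1 jq.2 = p := by
          intro p hp
          obtain ⟨j, q, hqL, hq⟩ := hcover p (hCsubL a p hp)
          refine ⟨(j, q), hqL, ?_, hq⟩
          intro hqa
          exact hno j q hqa (hq ▸ hp)
        choose wit hwitL hwitno hwitψ using hwit
        set rep : Fin (N+1) → X := fun b => (hCne b).choose with hrepdef
        have hrep : ∀ b, rep b ∈ C b := fun b => (hCne b).choose_spec
        set κ : X → X := fun q =>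
          if h : ∃ b, a < b ∧ q ∈ C b then rep h.choose else q with hκdef
        set Reps : Finset X :=
          Finset.univ.image rep with hRepsdef
        set Shallow : Finset X := (Finset.range (a:ℕ)).biUnion
          (fun i => if h : i < N+1 then C ⟨i, h⟩ else ∅) with hShdef
        have hSsub : ∀ q, q ∈ L → q ∉ C a → κ q ∈ F ∪ Shallow ∪ Reps := by
          intro q hqL hqa
          by_cases hdeep : ∃ b, a < b ∧ q ∈ C b
          · rw [hκdef]
            simp only [dif_pos hdeep]
            exact Finset.mem_union_right _
              (Finset.mem_image.mpr ⟨hdeep.choose, Finset.mem_univ _, rfl⟩)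
          · rw [hκdef]
            simp only [dif_neg hdeep]
            rcases hmemL q hqL with hF1 | ⟨b, hb⟩
            · exact Finset.mem_union_left _ (Finset.mem_union_left _ hF1)
            · have hba : b < a := by
                rcases lt_trichotomy b a with h | h | h
                · exact h
                · exact absurd (h ▸ hb) hqa
                · exact absurd ⟨b, h, hb⟩ hdeep
              refine Finset.mem_union_left _ (Finset.mem_union_right _ ?_)
              refine Finset.mem_biUnion.mpr ⟨(b:ℕ), Finset.mem_range.mpr hba, ?_⟩
              rw [dif_pos b.isLt]
              simpa using hb
        have hShcard : Shallow.card ≤ (Finset.range (a:ℕ)).sum (fun i => B ^ (i+1)) := by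
          refine le_trans Finset.card_biUnion_le (le_of_eq ?_)
          refine Finset.sum_congr rfl ?_
          intro i hi
          have hia : i < (a:ℕ) := Finset.mem_range.mp hi
          have haN : (a:ℕ) < N+1 := a.isLt
          have hiN : i < N+1 := by omega
          rw [dif_pos hiN, hCcard]
        have hRepscard : Reps.card ≤ N+1 := by
          refine le_trans Finset.card_image_le ?_
          simp
        have hclass : (F ∪ Shallow ∪ Reps).card ≤
            F.card + (Finset.range (a:ℕ)).sum (fun i => B ^ (i+1)) + (N+1) := by
          have h1 := Finset.card_union_le (F ∪ Shallow) Reps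
          have h2 := Finset.card_union_le F Shallow
          omega
        have hcardlt : (Finset.univ ×ˢ (F ∪ Shallow ∪ Reps) : Finset (Fin N × X)).card
            < (C a).card := by
          rw [Finset.card_product, Finset.card_univ, Fintype.card_fin, hCcard]
          calc N * (F ∪ Shallow ∪ Reps).card
              ≤ N * (F.card + (Finset.range (a:ℕ)).sum (fun i => B ^ (i+1)) + (N+1)) :=
                Nat.mul_le_mul_left _ hclass
            _ < B ^ ((a:ℕ)+1) := key_count N F.card (a:ℕ)
        set g : X → Fin N × X := fun p =>
          if hp : p ∈ C a then ((wit p hp).1, κ (wit p hp).2) else (⟨0, hN⟩, x₀) with hgdef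
        have hgmaps : ∀ p ∈ C a, g p ∈ (Finset.univ ×ˢ (F ∪ Shallow ∪ Reps)) := by
          intro p hp
          rw [hgdef]
          simp only [dif_pos hp]
          exact Finset.mem_product.mpr ⟨Finset.mem_univ _, hSsub _ (hwitL p hp) (hwitno p hp)⟩
        obtain ⟨p, hp, p', hp', hpp', hgeq⟩ :=
          Finset.exists_ne_map_eq_of_card_lt_of_maps_to hcardlt hgmaps
        rw [hgdef] at hgeq
        simp only [dif_pos hp, dif_pos hp'] at hgeq
        obtain ⟨hjeq, hκeq⟩ := Prod.mk.inj hgeq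
        have hqL := hwitL p hp
        have hq'L := hwitL p' hp'
        have hψq : ψ (wit p hp).1 (wit p hp).2 = p := hwitψ p hp
        have hψq' : ψ (wit p' hp').1 (wit p' hp').2 = p' := hwitψ p' hp'
        rw [← hjeq] at hψq'
        by_cases hdq : ∃ b, a < b ∧ (wit p hp).2 ∈ C b
        · by_cases hdq' : ∃ b, a < b ∧ (wit p' hp').2 ∈ C b
          · -- both witnesses deep: they collapse under `ψ`
            have e1 : κ (wit p hp).2 = rep hdq.choose := by
              rw [hκdef]; simp only [dif_pos hdq]
            have e2 : κ (wit p' hp').2 = rep hdq'.choose := by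
              rw [hκdef]; simp only [dif_pos hdq']
            have hbb : hdq.choose = hdq'.choose := by
              by_contra hne
              have hm1 := hrep hdq.choose
              have hm2 := hrep hdq'.choose
              rw [← e1, hκeq, e2] at hm1
              exact hdisj _ _ hne _ hm1 hm2
            obtain ⟨hab1, hqb⟩ := hdq.choose_spec
            obtain ⟨hab2, hq'b⟩ := hdq'.choose_spec
            rw [← hbb] at hq'b
            have hcol : ψ (wit p hp).1 (wit p hp).2 = ψ (wit p hp).1 (wit p' hp').2 := by
              by_contra hne2
              have h50 := hband a hdq.choose hab1 (wit p hp).2 hqb (wit p' hp').2 hq'b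
                (ψ (wit p hp).1 (wit p hp).2) (by rw [hψq]; exact hp)
                (ψ (wit p hp).1 (wit p' hp').2) (by rw [hψq']; exact hp')
                hne2
              have hlip := hψlip (wit p hp).1 (wit p hp).2 hqL (wit p' hp').2 hq'L
              have hσd := hσle _ (hψL _ _ hqL) _ (hψL _ _ hq'L) hne2
              linarith [hσpos]
            rw [hψq, hψq'] at hcol
            exact hpp' hcol
          · exfalso
            have e1 : κ (wit p hp).2 = rep hdq.choose := by
              rw [hκdef]; simp only [dif_pos hdq]
            have e2 : κ (wit p' hp').2 = (wit p' hp').2 := by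
              rw [hκdef]; simp only [dif_neg hdq']
            apply hdq'
            refine ⟨hdq.choose, hdq.choose_spec.1, ?_⟩
            rw [← e2, ← hκeq, e1]
            exact hrep _
        · by_cases hdq' : ∃ b, a < b ∧ (wit p' hp').2 ∈ C b
          · exfalso
            have e1 : κ (wit p hp).2 = (wit p hp).2 := by
              rw [hκdef]; simp only [dif_neg hdq]
            have e2 : κ (wit p' hp').2 = rep hdq'.choose := by
              rw [hκdef]; simp only [dif_pos hdq']
            apply hdq
            refine ⟨hdq'.choose, hdq'.choose_spec.1, ?_⟩
            rw [← e1, hκeq, e2]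
            exact hrep _
          · have e1 : κ (wit p hp).2 = (wit p hp).2 := by
              rw [hκdef]; simp only [dif_neg hdq]
            have e2 : κ (wit p' hp').2 = (wit p' hp').2 := by
              rw [hκdef]; simp only [dif_neg hdq']
            have hqq : (wit p hp).2 = (wit p' hp').2 := by
              rw [← e1, ← e2, hκeq]
            rw [← hqq] at hψq'
            exact hpp' (hψq.symm.trans hψq')
      -- upgrade self-sources to trapping
      have htrap : ∀ a : Fin (N+1), ∃ j : Fin N, ∀ p ∈ C a, ψ j p ∈ C a := by
        intro a
        obtain ⟨j, q₀, hq₀, hin⟩ := hself a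
        refine ⟨j, fun p hp => ?_⟩
        by_contra hpn
        have h1 : dist (ψ j p) (ψ j q₀) ≤ dist p q₀ + 4*ε' :=
          hψlip j p (hCsubL a p hp) q₀ (hCsubL a q₀ hq₀)
        have h2 : dist p q₀ ≤ dist p (v a) + dist q₀ (v a) := dist_triangle_right _ _ _
        have h3 := hCdist a p hp
        have h4 := hCdist a q₀ hq₀
        have h5 : Δ/2 ≤ dist (ψ j q₀) (ψ j p) :=
          hsep a (ψ j q₀) hin (ψ j p) (hψL j p (hCsubL a p hp)) hpn
        rw [dist_comm (ψ j q₀) (ψ j p)] at h5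
        linarith [hσ2r, hΔpos]
      choose jsel hjsel using htrap
      obtain ⟨a, b, hab, hjab⟩ := Fintype.exists_ne_map_eq_of_card_lt jsel (by simp)
      have hQfix : ∀ c : Fin (N+1), jsel c = jsel a →
          ∃ z p, p ∈ C c ∧ z ∈ K' ∧ dist z p ≤ ε' ∧ w (jsel a) z = z := by
        intro c hc
        have hQc : IsCompact (⋃ p ∈ (↑(C c) : Set X), (K' ∩ closedBall p ε')) :=
          (C c).finite_toSet.isCompact_biUnion
            (fun p _ => hK'c.inter_right Metric.isClosed_closedBall)
        have hQne : (⋃ p ∈ (↑(C c) : Set X), (K' ∩ closedBall p ε')).Nonempty := by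
          obtain ⟨p, hp⟩ := hCne c
          obtain ⟨hxK, hxd⟩ := hxspec p (hCsubL c p hp)
          exact ⟨xbar p, Set.mem_biUnion (show p ∈ (↑(C c) : Set X) from hp)
            ⟨hxK, mem_closedBall.mpr (le_of_lt hxd)⟩⟩
        have hmaps : Set.MapsTo (w (jsel a)) (⋃ p ∈ (↑(C c) : Set X), (K' ∩ closedBall p ε'))
            (⋃ p ∈ (↑(C c) : Set X), (K' ∩ closedBall p ε')) := by
          intro x hx
          rw [Set.mem_iUnion₂] at hx
          obtain ⟨p, hp, hxK, hxB⟩ := hx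
          have hpC : p ∈ C c := hp
          have hpL := hCsubL c p hpC
          have hb := hblob (jsel a) p hpL x hxK (mem_closedBall.mp hxB)
          have hψin : ψ (jsel a) p ∈ C c := by
            rw [← hc]
            exact hjsel c p hpC
          exact Set.mem_biUnion (show ψ (jsel a) p ∈ (↑(C c) : Set X) from hψin)
            ⟨hwK' (jsel a) x hxK, mem_closedBall.mpr (le_of_lt hb.2)⟩
        obtain ⟨z, hzQ, hzfix⟩ := exists_fixed_point hQc hQne (hstrict (jsel a)) hmaps
        rw [Set.mem_iUnion₂] at hzQ
        obtain ⟨p, hp, hzK, hzB⟩ := hzQ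
        exact ⟨z, p, hp, hzK, mem_closedBall.mp hzB, hzfix⟩
      obtain ⟨z₁, p₁, hp₁, hz₁K, hz₁d, hfix₁⟩ := hQfix a rfl
      obtain ⟨z₂, p₂, hp₂, hz₂K, hz₂d, hfix₂⟩ := hQfix b hjab.symm
      have hp₂na : p₂ ∉ C a := hdisj b a (Ne.symm hab) p₂ hp₂
      have hsep12 : Δ/2 ≤ dist p₁ p₂ := hsep a p₁ hp₁ p₂ (hCsubL b p₂ hp₂) hp₂na
      have hzne : z₁ ≠ z₂ := by
        intro h
        subst h
        have h1 : dist p₁ p₂ ≤ dist z₁ p₁ + dist z₁ p₂ := dist_triangle_left _ _ _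
        linarith [hσ2r, hΔpos]
      have hlt := hstrict (jsel a) z₁ z₂ hzne
      rw [hfix₁, hfix₂] at hlt
      exact lt_irrefl _ hlt

end Core

/-- In a complete separable perfect metric space, the collection of nonempty compact
sets which are attractors of some weakly contractive (Rakotch contractive) IFS is
meagre in the hyperspace with the Hausdorff metric. -/
theorem rakotch_attractors_meagre {X : Type*} [MetricSpace X] [CompleteSpace X]
    [TopologicalSpace.SeparableSpace X]
    (hX : ∀ x : X, (nhdsWithin x {x}ᶜ).NeBot) :
    IsMeagre {K : TopologicalSpace.NonemptyCompacts X |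
      ∃ (N : ℕ) (w : Fin N → X → X),
        -- each wᵢ is a Rakotch contraction
        (∀ i : Fin N, ∀ δ : ℝ, 0 < δ → ∃ lam : ℝ, lam < 1 ∧
          ∀ x y : X, δ ≤ dist x y → dist (w i x) (w i y) ≤ lam * dist x y) ∧
        -- K is invariant
        (⋃ i, w i '' (K : Set X)) = (K : Set X) ∧
        -- K attracts all nonempty compact sets under the Hutchinson operator
        (∀ S : Set X, S.Nonempty → IsCompact S →
          Filter.Tendsto
            (fun n => Metric.hausdorffDist ((fun T => ⋃ i, w i '' T)^[n] S) (K : Set X))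
            Filter.atTop (nhds 0))} := by
  classical
  set A : ℕ → Set (NonemptyCompacts X) := fun N =>
    {K : NonemptyCompacts X | ∃ w : Fin N → X → X,
      (∀ i, ∀ x y : X, x ≠ y → dist (w i x) (w i y) < dist x y) ∧
      (⋃ i, w i '' (K : Set X)) = (K : Set X)} with hA
  have hsub : {K : TopologicalSpace.NonemptyCompacts X |
      ∃ (N : ℕ) (w : Fin N → X → X),
        (∀ i : Fin N, ∀ δ : ℝ, 0 < δ → ∃ lam : ℝ, lam < 1 ∧
          ∀ x y : X, δ ≤ dist x y → dist (w i x) (w i y) ≤ lam * dist x y) ∧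
        (⋃ i, w i '' (K : Set X)) = (K : Set X) ∧
        (∀ S : Set X, S.Nonempty → IsCompact S →
          Filter.Tendsto
            (fun n => Metric.hausdorffDist ((fun T => ⋃ i, w i '' T)^[n] S) (K : Set X))
            Filter.atTop (nhds 0))} ⊆ ⋃ n, A n := by
    rintro K ⟨N, w, hRak, hinvr, -⟩
    refine Set.mem_iUnion.mpr ⟨N, ?_⟩
    refine ⟨w, ?_, hinvr⟩
    intro i x y hxy
    obtain ⟨lam, hlam, hc⟩ := hRak i (dist x y) (dist_pos.mpr hxy)
    have h1 := hc x y le_rfl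
    have hd : 0 < dist x y := dist_pos.mpr hxy
    nlinarith
  refine IsMeagre.mono (hs := isMeagre_iUnion (fun n => ?_)) hsub
  have hND : interior (closure (A n)) = ∅ := by
    rw [Set.eq_empty_iff_forall_notMem]
    intro K₀ hK₀
    rw [mem_interior_iff_mem_nhds, Metric.mem_nhds_iff] at hK₀
    obtain ⟨ε, hε, hball⟩ := hK₀
    obtain ⟨L, hLne, hLd, ε', hε', hmain⟩ :=
      core_lemma hX K₀.isCompact K₀.nonempty n (half_pos hε)
    set Lc : NonemptyCompacts X := ⟨⟨(L : Set X), L.finite_toSet.isCompact⟩, hLne⟩ with hLc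
    have hLball : Lc ∈ ball K₀ ε := by
      rw [mem_ball, NonemptyCompacts.dist_eq]
      have h1 : Metric.hausdorffDist (Lc : Set X) (K₀ : Set X) < ε/2 := hLd
      linarith
    have hLcl : Lc ∈ closure (A n) := hball hLball
    rw [Metric.mem_closure_iff] at hLcl
    obtain ⟨K', hK'A, hdist⟩ := hLcl ε' hε'
    obtain ⟨w, hstrict, hinv⟩ := hK'A
    refine hmain (K' : Set X) K'.isCompact K'.nonempty ?_ w hstrict hinv
    have h2 : Metric.hausdorffDist (Lc : Set X) (K' : Set X) < ε' := by
      rw [← NonemptyCompacts.dist_eq]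
      exact hdist
    rw [Metric.hausdorffDist_comm] at h2
    exact h2
  rw [IsMeagre]
  have hdense : Dense (closure (A n))ᶜ := by
    rw [← interior_eq_empty_iff_dense_compl]
    exact hND
  have hres : (closure (A n))ᶜ ∈ residual (NonemptyCompacts X) :=
    residual_of_dense_open isClosed_closure.isOpen_compl hdense
  exact Filter.mem_of_superset hres (Set.compl_subset_compl.mpr subset_closure)
end

section
/- Let (X,d) be a complete metric space, γ the Hausdorff measure of noncompactness, and W : X → 2^X a multivalued Browder contraction with compact values (d_H(W(x),W(y)) ≤ φ(d(x,y)) for a nondecreasing right-continuous φ with φ(t) < t for t > 0). Then W is condensing with respect to γ: γ(W(S)) < γ(S) whenever 0 < γ(S) < ∞, and γ(W(S)) = 0 whenever γ(S) = 0. -/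
/-- The Hausdorff measure of noncompactness: the infimum of radii r such that the
set can be covered by finitely many balls of radius r (∞ if no such cover exists). -/
noncomputable def hausdorffMNC {X : Type*} [MetricSpace X] (S : Set X) : ENNReal :=
  sInf {r : ENNReal | ∃ t : Finset X, S ⊆ ⋃ x ∈ t, EMetric.ball x r}

lemma aux_cover {X : Type*} [MetricSpace X]
    (W : X → Set X) (hWne : ∀ x : X, (W x).Nonempty) (hWc : ∀ x : X, IsCompact (W x))
    (φ : ℝ → ℝ)
    (hφmono : ∀ s t : ℝ, 0 ≤ s → s ≤ t → φ s ≤ φ t)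
    (hW : ∀ x y : X, Metric.hausdorffDist (W x) (W y) ≤ φ (dist x y))
    (S : Set X) (r : ℝ) (hr : 0 < r)
    (hlt : hausdorffMNC S < ENNReal.ofReal r) :
    hausdorffMNC (⋃ x ∈ S, W x) ≤ ENNReal.ofReal (φ r) := by
  classical
  -- get a finite cover of S by balls of radius r
  obtain ⟨ρ, ⟨t, ht⟩, hρ⟩ := sInf_lt_iff.mp hlt
  have hcov : S ⊆ ⋃ x ∈ t, EMetric.ball x (ENNReal.ofReal r) := by
    refine ht.trans ?_
    exact Set.iUnion₂_mono fun i _ => EMetric.ball_subset_ball hρ.le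
  -- suffices: cover of W(S) by radius φ r + ε balls for all ε > 0
  have key : ∀ ε : ℝ, 0 < ε →
      hausdorffMNC (⋃ x ∈ S, W x) ≤ ENNReal.ofReal (φ r + ε) := by
    intro ε hε
    -- cover each W i, i ∈ t, by finitely many balls of radius ε/2
    have hF : ∀ i : X, ∃ F : Finset X,
        W i ⊆ ⋃ y ∈ F, EMetric.ball y (ENNReal.ofReal (ε/2)) := by
      intro i
      have htb := (hWc i).totallyBounded
      rw [EMetric.totallyBounded_iff] at htb
      obtain ⟨u, hufin, hu⟩ := htb (ENNReal.ofReal (ε/2))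
        (by simp [ENNReal.ofReal_pos]; linarith)
      exact ⟨hufin.toFinset, by simpa [EMetric.ball] using hu⟩
    choose F hFc using hF
    refine sInf_le ⟨t.biUnion F, ?_⟩
    rintro w hw
    simp only [Set.mem_iUnion] at hw
    obtain ⟨x, hxS, hwx⟩ := hw
    obtain ⟨i, hit, hxi⟩ := Set.mem_iUnion₂.mp (hcov hxS)
    have hdxi : dist x i < r := by
      change edist _ _ < _ at hxi
      rwa [edist_dist, ENNReal.ofReal_lt_ofReal_iff hr] at hxi
    have hHD : Metric.hausdorffDist (W x) (W i) < φ r + ε/2 := by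
      have h1 : φ (dist x i) ≤ φ r := hφmono _ _ dist_nonneg hdxi.le
      have := hW x i
      linarith
    have hfin : EMetric.hausdorffEdist (W x) (W i) ≠ ⊤ :=
      Metric.hausdorffEdist_ne_top_of_nonempty_of_bounded (hWne x) (hWne i)
        (hWc x).isBounded (hWc i).isBounded
    obtain ⟨y, hyWi, hwy⟩ := Metric.exists_dist_lt_of_hausdorffDist_lt hwx hHD hfin
    obtain ⟨z, hzF, hyz⟩ := Set.mem_iUnion₂.mp (hFc i hyWi)
    have hyz' : dist y z < ε/2 := by
      change edist _ _ < _ at hyz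
      rwa [edist_dist, ENNReal.ofReal_lt_ofReal_iff (by linarith)] at hyz
    refine Set.mem_iUnion₂.mpr ⟨z, Finset.mem_biUnion.mpr ⟨i, hit, hzF⟩, ?_⟩
    change edist _ _ < _
    rw [edist_dist]
    have : dist w z < φ r + ε := by
      have := dist_triangle w y z
      linarith
    exact ENNReal.ofReal_lt_ofReal_iff_of_nonneg dist_nonneg |>.mpr this
  -- pass to the limit ε → 0
  refine ENNReal.le_of_forall_pos_le_add fun ε hε _ => ?_
  calc hausdorffMNC (⋃ x ∈ S, W x) ≤ ENNReal.ofReal (φ r + ε) := key ε hε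
    _ ≤ ENNReal.ofReal (φ r) + ENNReal.ofReal ε := ENNReal.ofReal_add_le
    _ = ENNReal.ofReal (φ r) + ε := by rw [ENNReal.ofReal_coe_nnreal]

/-- A multivalued Browder contraction with compact values on a complete metric space
is condensing with respect to the Hausdorff measure of noncompactness. -/
theorem browder_multifunction_condensing {X : Type*} [MetricSpace X] [CompleteSpace X]
    (W : X → Set X) (hWne : ∀ x : X, (W x).Nonempty) (hWc : ∀ x : X, IsCompact (W x))
    (φ : ℝ → ℝ)
    (hφmono : ∀ s t : ℝ, 0 ≤ s → s ≤ t → φ s ≤ φ t)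
    (hφnonneg : ∀ t : ℝ, 0 ≤ t → 0 ≤ φ t)
    (hφrc : ∀ t : ℝ, 0 ≤ t → ContinuousWithinAt φ (Set.Ici t) t)
    (hφlt : ∀ t : ℝ, 0 < t → φ t < t)
    (hW : ∀ x y : X, Metric.hausdorffDist (W x) (W y) ≤ φ (dist x y)) :
    ∀ S : Set X,
      (hausdorffMNC S = 0 → hausdorffMNC (⋃ x ∈ S, W x) = 0) ∧
      (0 < hausdorffMNC S → hausdorffMNC S < ⊤ →
        hausdorffMNC (⋃ x ∈ S, W x) < hausdorffMNC S) := by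
  intro S
  constructor
  · intro hS0
    refine le_antisymm ?_ zero_le
    refine ENNReal.le_of_forall_pos_le_add fun ε hε _ => ?_
    rw [zero_add]
    have hε' : (0:ℝ) < ε := hε
    have h1 : hausdorffMNC S < ENNReal.ofReal ε := by
      rw [hS0]; exact ENNReal.ofReal_pos.mpr hε'
    calc hausdorffMNC (⋃ x ∈ S, W x)
        ≤ ENNReal.ofReal (φ ε) := aux_cover W hWne hWc φ hφmono hW S ε hε' h1
      _ ≤ ENNReal.ofReal ε := ENNReal.ofReal_le_ofReal (hφlt ε hε').le
      _ = (ε : ENNReal) := ENNReal.ofReal_coe_nnreal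
  · intro hpos htop
    set c := (hausdorffMNC S).toReal with hc
    have hc0 : 0 < c := ENNReal.toReal_pos hpos.ne' htop.ne
    have hSc : hausdorffMNC S = ENNReal.ofReal c := (ENNReal.ofReal_toReal htop.ne).symm
    -- find r > c with φ r < c, by right continuity
    have h1 : ∀ᶠ x in nhdsWithin c (Set.Ici c), φ x < c :=
      (hφrc c hc0.le).eventually_lt_const (hφlt c hc0)
    have h2 : ∀ᶠ x in nhdsWithin c (Set.Ioi c), φ x < c :=
      h1.filter_mono (nhdsWithin_mono c Set.Ioi_subset_Ici_self)
    obtain ⟨r, hφr, hrc⟩ := (h2.and eventually_mem_nhdsWithin).exists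
    have hrc' : c < r := hrc
    have hlt : hausdorffMNC S < ENNReal.ofReal r := by
      rw [hSc]
      exact (ENNReal.ofReal_lt_ofReal_iff (hc0.trans hrc')).mpr hrc'
    calc hausdorffMNC (⋃ x ∈ S, W x)
        ≤ ENNReal.ofReal (φ r) := aux_cover W hWne hWc φ hφmono hW S r (hc0.trans hrc') hlt
      _ < ENNReal.ofReal c := (ENNReal.ofReal_lt_ofReal_iff hc0).mpr hφr
      _ = hausdorffMNC S := hSc.symm
end

section
/- Let W : X → 2^X be a multivalued Browder contraction on a metric space with bounded values and modulus φ satisfying lim_{r→∞}(r − φ(r)) = ∞. Then for each x₀ ∈ X there exists r₀ > 0 such that W(D(x₀,r)) ⊆ D(x₀,r) for all r ≥ r₀, where D denotes closed balls. -/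
/-- A multivalued Browder contraction with bounded values whose modulus φ satisfies
r − φ(r) → ∞ maps all sufficiently large closed balls into themselves. -/
theorem browder_multifunction_ball_invariance {X : Type*} [MetricSpace X]
    (W : X → Set X) (hWne : ∀ x : X, (W x).Nonempty)
    (hWb : ∀ x : X, Bornology.IsBounded (W x))
    (φ : ℝ → ℝ)
    (hφmono : ∀ s t : ℝ, 0 ≤ s → s ≤ t → φ s ≤ φ t)
    (hφnonneg : ∀ t : ℝ, 0 ≤ t → 0 ≤ φ t)
    (hφrc : ∀ t : ℝ, 0 ≤ t → ContinuousWithinAt φ (Set.Ici t) t)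
    (hφlt : ∀ t : ℝ, 0 < t → φ t < t)
    (hW : ∀ x y : X, Metric.hausdorffDist (W x) (W y) ≤ φ (dist x y))
    (hphiInf : Filter.Tendsto (fun r : ℝ => r - φ r) Filter.atTop Filter.atTop) :
    ∀ x₀ : X, ∃ r₀ : ℝ, 0 < r₀ ∧ ∀ r : ℝ, r₀ ≤ r →
      (⋃ x ∈ Metric.closedBall x₀ r, W x) ⊆ Metric.closedBall x₀ r := by
  intro x₀
  obtain ⟨c, hc⟩ := (hWb x₀).subset_closedBall x₀
  obtain ⟨N, hN⟩ := (Filter.tendsto_atTop.mp hphiInf c).exists_forall_of_atTop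
  refine ⟨max N 1, lt_of_lt_of_le one_pos (le_max_right _ _), ?_⟩
  intro r hr y hy
  simp only [Set.mem_iUnion] at hy
  obtain ⟨x, hx, hyx⟩ := hy
  have hr1 : (1 : ℝ) ≤ r := le_trans (le_max_right _ _) hr
  have hrN : N ≤ r := le_trans (le_max_left _ _) hr
  have hne : EMetric.hausdorffEdist (W x) (W x₀) ≠ ⊤ :=
    Metric.hausdorffEdist_ne_top_of_nonempty_of_bounded (hWne x) (hWne x₀) (hWb x) (hWb x₀)
  have h1 : Metric.infDist y (W x₀) ≤ φ r := by
    calc Metric.infDist y (W x₀)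
        ≤ Metric.infDist y (W x) + Metric.hausdorffDist (W x) (W x₀) :=
          Metric.infDist_le_infDist_add_hausdorffDist hne
      _ = Metric.hausdorffDist (W x) (W x₀) := by
          rw [Metric.infDist_zero_of_mem hyx, zero_add]
      _ ≤ φ (dist x x₀) := hW x x₀
      _ ≤ φ r := hφmono _ _ dist_nonneg (Metric.mem_closedBall.mp hx)
  have h2 : dist y x₀ - c ≤ Metric.infDist y (W x₀) := by
    by_contra h
    push_neg at h
    obtain ⟨z, hz, hdz⟩ := (Metric.infDist_lt_iff (hWne x₀)).mp h
    have hzc := Metric.mem_closedBall.mp (hc hz)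
    linarith [dist_triangle y z x₀]
  have h3 : φ r + c ≤ r := by linarith [hN r hrN]
  rw [Metric.mem_closedBall]
  linarith
end
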